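/- Let A ⊆ V∖S. If for every vertex a ∈ Pa(S)∖A there is no path of bidirected edges from a to a vertex of S all of whose vertices lie in V∖A, then there is no hedge formed for Q[S] in G[V∖A]; equivalently, A intersects every hedge formed for Q[S] in G. (Correctness of cutting all bidirected paths from Pa(S) to S.) -/

import Mathlib

/-- A semi-Markovian graph on vertex type `V`: a DAG of directed edges together with a
symmetric irreflexive relation of bidirected edges. `dir x y` means there is a directed
edge from `x` to `y`, i.e. `x` is a parent of `y`. -/
structure SemiMarkovian (V : Type*) where
  dir : V → V → Prop
  bid : V → V → Prop
  bid_symm : ∀ x y, bid x y → bid y x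
  bid_irrefl : ∀ x, ¬ bid x x
  acyclic : ∀ x, ¬ Relation.TransGen dir x x

namespace SemiMarkovian

variable {V : Type*}

/-- The induced subgraph of `G` on the vertex set `W`. -/
def induce (G : SemiMarkovian V) (W : Set V) : SemiMarkovian V where
  dir a b := a ∈ W ∧ b ∈ W ∧ G.dir a b
  bid a b := a ∈ W ∧ b ∈ W ∧ G.bid a b
  bid_symm := fun x y h => ⟨h.2.1, h.1, G.bid_symm x y h.2.2⟩
  bid_irrefl := fun x h => G.bid_irrefl x h.2.2
  acyclic := fun x h =>
    G.acyclic x (Relation.TransGen.mono (fun _ _ hab => hab.2.2 :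
      ∀ a b, (a ∈ W ∧ b ∈ W ∧ G.dir a b) → G.dir a b) _ _ h)

/-- There is a directed path (possibly of length zero) from `x` to `y` all of whose
vertices lie in `F`. -/
def DirPathIn (G : SemiMarkovian V) (F : Set V) (x y : V) : Prop :=
  x ∈ F ∧ Relation.ReflTransGen (fun a b => b ∈ F ∧ G.dir a b) x y

/-- `x` and `y` are joined by a path of bidirected edges all of whose vertices lie in `F`. -/
def BidConnIn (G : SemiMarkovian V) (F : Set V) (x y : V) : Prop :=
  x ∈ F ∧ Relation.ReflTransGen (fun a b => b ∈ F ∧ G.bid a b) x y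

/-- `x` is an ancestor of the set `S` in `G[F]`. -/
def AncestorIn (G : SemiMarkovian V) (F S : Set V) (x : V) : Prop :=
  ∃ s ∈ S, G.DirPathIn F x s

/-- `G[F]` is a c-component: any two vertices of `F` are joined by a path of bidirected
edges all of whose vertices lie in `F`. -/
def CComponent (G : SemiMarkovian V) (F : Set V) : Prop :=
  ∀ x ∈ F, ∀ y ∈ F, G.BidConnIn F x y

/-- `F` is a hedge formed for `Q[S]` in `G`: `S ⊊ F`, every vertex of `F` is an ancestor of
`S` in `G[F]`, and `G[F]` is a c-component. -/
def IsHedge (G : SemiMarkovian V) (S F : Set V) : Prop :=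
  S ⊂ F ∧ (∀ x ∈ F, G.AncestorIn F S x) ∧ G.CComponent F

/-- The hedge hull of `S` in `G`: the union of `S` with all hedges formed for `Q[S]` in `G`. -/
def Hhull (G : SemiMarkovian V) (S : Set V) : Set V :=
  S ∪ ⋃₀ {F | G.IsHedge S F}

/-- Vertices outside `S` that are parents of some vertex of `S`. -/
def Pa (G : SemiMarkovian V) (S : Set V) : Set V :=
  {x | x ∉ S ∧ ∃ s ∈ S, G.dir x s}

/-- Vertices outside `S` that have a bidirected edge to some vertex of `S`. -/
def Bid (G : SemiMarkovian V) (S : Set V) : Set V :=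
  {x | x ∉ S ∧ ∃ s ∈ S, G.bid x s}

/-- `Pa↔(S) := Pa(S) ∩ Bid(S)`. -/
def PaBid (G : SemiMarkovian V) (S : Set V) : Set V := G.Pa S ∩ G.Bid S

end SemiMarkovian

private lemma lift_path {V : Type*} (r : V → V → Prop) (F W : Set V) (hFW : F ⊆ W) {x y : V}
    (hx : x ∈ F) (h : Relation.ReflTransGen (fun a b => b ∈ F ∧ r a b) x y) :
    y ∈ F ∧ Relation.ReflTransGen (fun a b => b ∈ F ∧ a ∈ W ∧ b ∈ W ∧ r a b) x y := by
  induction h with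
  | refl => exact ⟨hx, .refl⟩
  | tail p step ih => exact ⟨step.1, ih.2.tail ⟨step.1, hFW ih.1, hFW step.1, step.2⟩⟩

private lemma find_parent {V : Type*} (G : SemiMarkovian V) (S F W : Set V) {x s : V}
    (hs : s ∈ S)
    (h : Relation.ReflTransGen (fun a b => b ∈ F ∧ (G.induce W).dir a b) x s) :
    x ∈ F → (x ∈ S ∨ ∃ a ∈ F, a ∉ S ∧ a ∈ W ∧ ∃ t ∈ S, G.dir a t) := by
  induction h using Relation.ReflTransGen.head_induction_on with
  | refl => exact fun _ => Or.inl hs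
  | @head a c step p ih =>
    intro hxF
    by_cases hxS : a ∈ S
    · exact Or.inl hxS
    · rcases ih step.1 with hbS | ha
      · exact Or.inr ⟨_, hxF, hxS, step.2.1, _, hbS, step.2.2.2⟩
      · exact Or.inr ha

/-- If `A ⊆ V∖S` and for every `a ∈ Pa(S)∖A` there is no bidirected path
from `a` to `S` inside `V∖A`, then there is no hedge formed for `Q[S]` in `G[V∖A]`;
equivalently `A` intersects every hedge formed for `Q[S]` in `G`. -/
theorem cut_bid_paths_correct {V : Type*} [Fintype V] (G : SemiMarkovian V) (S A : Set V)
    (hS : G.CComponent S) (hA : A ⊆ Sᶜ)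
    (hcut : ∀ a ∈ G.Pa S \ A, ¬ ∃ s ∈ S, G.BidConnIn Aᶜ a s) :
    (¬ ∃ F, (G.induce Aᶜ).IsHedge S F) ∧ ∀ F, G.IsHedge S F → (A ∩ F).Nonempty := by
  have part1 : ¬ ∃ F, (G.induce Aᶜ).IsHedge S F := by
    rintro ⟨F, hsub, hanc, hcc⟩
    obtain ⟨x, hxF, hxS⟩ := Set.exists_of_ssubset hsub
    obtain ⟨s, hsS, hxFmem, hpath⟩ := hanc x hxF
    rcases find_parent G S F Aᶜ hsS hpath hxF with hxS' | ⟨a, haF, haS, haA, t, htS, hdir⟩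
    · exact hxS hxS'
    · have haPa : a ∈ G.Pa S \ A := ⟨⟨haS, t, htS, hdir⟩, haA⟩
      apply hcut a haPa
      obtain ⟨_, hbid⟩ := hcc a haF t (hsub.1 htS)
      refine ⟨t, htS, haA, Relation.ReflTransGen.mono ?_ _ _ hbid⟩
      rintro p q ⟨hqF, _, hqA, hpq⟩
      exact ⟨hqA, hpq⟩
  refine ⟨part1, fun F hF => ?_⟩
  by_contra hne
  have hFA : F ⊆ Aᶜ := fun v hv hvA =>
    hne ⟨v, hvA, hv⟩
  apply part1
  refine ⟨F, hF.1, ?_, ?_⟩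
  · rintro x hxF
    obtain ⟨s, hsS, hxFmem, hpath⟩ := hF.2.1 x hxF
    obtain ⟨_, hp⟩ := lift_path G.dir F Aᶜ hFA hxFmem hpath
    exact ⟨s, hsS, hxFmem, hp⟩
  · intro x hxF y hyF
    obtain ⟨_, hp⟩ := (hF.2.2) x hxF y hyF
    obtain ⟨_, hp'⟩ := lift_path G.bid F Aᶜ hFA hxF hp
    exact ⟨hxF, hp'⟩
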